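/- arXiv:2105.00638 — 2 statements merged into one kernel-verified Lean document; each statement's English description precedes it below -/
import Mathlib

section
/- Let ĝ be an untwisted affine Lie algebra of simply-laced type with affine Weyl group Ŵ = W ⋉ Q acting on ĥ* by σt_β(μ) = σ(μ̄ + ⟨μ,K⟩β) + ⟨μ,K⟩Λ_0 + ((μ,Λ_0−β) − (1/2)|β|²⟨μ,K⟩)δ, and dot action σt_β ∘ μ = σt_β(μ + ρ + hΛ_0) − (ρ + hΛ_0). Fix λ ∈ Λ, α ∈ P_+ ∩ Q, k = p − h. Then σt_β ∘ (−p(α + λ_0 + ρ) + √p λ_p + kΛ_0) lies in the closure of the dominant chamber Ĉ⁺ = {μ : (γ, μ + ρ + hΛ_0) ≥ 0 for all γ ∈ Δ̂⁺_re} if and only if 0 ≤ (σ^{-1}(γ̄), p(β − (α + λ_0 + ρ)) + √p λ_p + ρ) ≤ p for all γ̄ ∈ Δ⁺. -/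
open scoped RealInnerProductSpace

/-- Affine dominance criterion.  The affine weight
`σt_β ∘ (-p(α+λ₀+ρ) + √p λ_p + kΛ₀)` (of level `k = p - h`, so that adding
`ρ̂ = ρ + hΛ₀` gives level `p`) lies in the closure of the dominant chamber
`Ĉ⁺ = {μ : (γ, μ + ρ + hΛ₀) ≥ 0 for all γ ∈ Δ̂⁺_re}` if and only if
`0 ≤ (σ⁻¹(γ̄), p(β - (α+λ₀+ρ)) + √p λ_p + ρ) ≤ p` for all `γ̄ ∈ Δ⁺`.

Here the classical part of `σt_β(ν̂ + ρ + hΛ₀)` is `X = σ(Y)` with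
`Y = p(β - (α+λ₀+ρ)) + √p λ_p + ρ + p(α+λ₀+ρ) - p(α+λ₀+ρ) = ...`, i.e.
`X = σ(-p(α+λ₀+ρ) + √p λ_p + ρ + p β)`, and the pairing of `μ̂` with a
positive real root `γ̄ + nδ` is `(γ̄, μ̄) + n·(level)`. -/
theorem affine_dominance_criterion
    {V : Type*} [NormedAddCommGroup V] [InnerProductSpace ℝ V]
    (posRoots roots : Finset V)
    (hroots : (roots : Set V) = (posRoots : Set V) ∪ ((fun a => -a) '' posRoots))
    (ρ θ : V) (h p : ℕ) (hh : 1 ≤ h) (hp : h - 1 ≤ p) (hp2 : 2 ≤ p)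
    (σ : V ≃ₗᵢ[ℝ] V) (hσ : ∀ a ∈ roots, σ a ∈ roots)
    (α l0 lp β : V) :
    -- `Y = p(β - (α + λ₀ + ρ)) + √p λ_p + ρ`; the classical part of
    -- `σt_β(μ + ρ + hΛ₀)` is `X = σ Y`, and its level is `p`
    let Y : V := (p : ℝ) • (β - (α + l0 + ρ)) + Real.sqrt p • lp + ρ
    let X : V := σ Y
    ((∀ γ ∈ posRoots, (0 : ℝ) ≤ ⟪γ, X⟫) ∧
        (∀ γ ∈ roots, ∀ n : ℕ, 0 < n → (0 : ℝ) ≤ ⟪γ, X⟫ + n * p)) ↔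
      (∀ γ ∈ posRoots,
        (0 : ℝ) ≤ ⟪σ.symm γ, Y⟫ ∧ ⟪σ.symm γ, Y⟫ ≤ (p : ℝ)) := by
  intro Y X
  have key : ∀ γ : V, ⟪γ, X⟫ = ⟪σ.symm γ, Y⟫ := by
    intro γ
    have : ⟪σ (σ.symm γ), σ Y⟫ = ⟪σ.symm γ, Y⟫ := σ.inner_map_map _ _
    simpa using this
  constructor
  · rintro ⟨h1, h2⟩ γ hγ
    refine ⟨by rw [← key]; exact h1 γ hγ, ?_⟩
    have hneg : -γ ∈ roots := by
      have : (-γ : V) ∈ (roots : Set V) := by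
        rw [hroots]; exact Or.inr ⟨γ, hγ, rfl⟩
      exact_mod_cast this
    have := h2 (-γ) hneg 1 one_pos
    rw [inner_neg_left, key] at this
    push_cast at this
    linarith
  · intro hG
    constructor
    · intro γ hγ; rw [key]; exact (hG γ hγ).1
    · intro γ hγ n hn
      have hpn : (p : ℝ) ≤ n * p := by
        have : (1 : ℝ) ≤ n := by exact_mod_cast hn
        nlinarith [Nat.cast_nonneg (α := ℝ) p]
      have hγ' : (γ : V) ∈ (posRoots : Set V) ∪ ((fun a => -a) '' posRoots) := by
        rw [← hroots]; exact_mod_cast hγ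
      rcases hγ' with hγ' | ⟨δ, hδ, rfl⟩
      · have := (hG γ hγ').1
        rw [← key] at this
        have : (0:ℝ) ≤ (n:ℝ) * p := by positivity
        linarith [(hG γ hγ').1, (key γ) ▸ (hG γ hγ').1]
      · have := (hG δ hδ).2
        rw [← key] at this
        simp only [inner_neg_left]
        linarith
end

section
/- Let g be simply-laced simple, p ≥ h, α ∈ P_+ ∩ Q, λ_0 ∈ Λ_0 ∪ {0}, and λ_p ∈ Λ_p with (√p λ_p + ρ, θ) ≤ p. Then the character identity Σ_{σ∈W} (−1)^{l(σ)} q^{(1/2)|√p σ(α+λ_0+ρ) − λ_p − (1/√p)ρ|²} = Σ_{σ∈W} (−1)^{l(σ)} q^{(1/(2p))|overline{y_σ ∘ μ_λ} + ρ|²} holds as formal q-series, where y_σ = t_{σ(ω_{λ_0}) − (α+λ_0+ρ)} σ σ_{λ_0}^{-1} ∈ Ŵ, μ_λ = σ_{λ_0}(−p ω_{λ_0} + √p λ_p + ρ) − ρ + (p−h)Λ_0, and the bar denotes the classical (finite) part of an affine weight. -/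
open scoped RealInnerProductSpace

/-!
Reindex the right-hand sum by `σ ↦ σ⁻¹`, which preserves `W` and the sign `(-1)^{l(σ)}`.
Then the `ω_{λ₀}`-contributions of `μ_λ` and of the translation cancel, leaving
`σ⁻¹(√p λ_p + ρ - p σ(α+λ₀+ρ))`, which is `-√p σ⁻¹` applied to the vector on the left.
Since `σ⁻¹` is an isometry its squared norm is `p` times the one on the left, so the
exponents agree termwise.
-/

theorem Finset.sum_comp_inv_of_inv_mem {G M : Type*} [InvolutiveInv G] [AddCommMonoid M]
    (W : Finset G) (hW : ∀ g ∈ W, g⁻¹ ∈ W) (f : G → M) :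
    ∑ g ∈ W, f g⁻¹ = ∑ g ∈ W, f g :=
  Finset.sum_nbij' (·⁻¹) (·⁻¹) hW hW (fun g _ => inv_inv g) (fun g _ => inv_inv g)
    (fun _ _ => rfl)

section

variable {V : Type*} [NormedAddCommGroup V] [NormedSpace ℝ V]

theorem LinearIsometryEquiv.inv_mul_inv_apply_add_smul_sub_eq (σ τ : V ≃ₗᵢ[ℝ] V) (p : ℝ)
    (ω β v : V) :
    (σ⁻¹ * τ⁻¹) (τ (-p • ω + v)) + p • (σ⁻¹ ω - β) = σ⁻¹ (v - p • σ β) := by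
  simp only [LinearIsometryEquiv.coe_mul, Function.comp_apply, LinearIsometryEquiv.coe_inv,
    LinearIsometryEquiv.symm_apply_apply, map_add, map_sub, map_smul]
  module

theorem norm_sqrt_smul_add_sub_smul_sq {p : ℝ} (hp : 0 < p) (x ρ b : V) :
    ‖√p • x + ρ - p • b‖ ^ 2 = p * ‖√p • b - x - (√p)⁻¹ • ρ‖ ^ 2 := by
  have hs : 0 < √p := Real.sqrt_pos.mpr hp
  have hneg : √p • x + ρ - p • b = -(√p • (√p • b - x - (√p)⁻¹ • ρ)) := by
    rw [smul_sub, smul_sub, smul_smul, Real.mul_self_sqrt hp.le, smul_smul,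
      mul_inv_cancel₀ hs.ne', one_smul]
    abel
  rw [hneg, norm_neg, norm_smul, Real.norm_of_nonneg hs.le, mul_pow, Real.sq_sqrt hp.le]

end

theorem character_identity_of_simple_quotient_general
    {V : Type*} [NormedAddCommGroup V] [InnerProductSpace ℝ V]
    -- the Weyl group, as a finite set of isometries with length function
    (W : Finset (V ≃ₗᵢ[ℝ] V)) (len : (V ≃ₗᵢ[ℝ] V) → ℕ)
    (hinv : ∀ σ ∈ W, σ⁻¹ ∈ W ∧ len σ⁻¹ = len σ)
    (ρ : V) (h p : ℕ) (hh : 1 ≤ h) (hp : h ≤ p)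
    -- `α + λ₀ + ρ`, the minuscule weight `ω_{λ₀}` and the Weyl element
    -- `σ_{λ₀}` attached to `λ₀` as in Lemma 3.10
    (α l0 ω0 : V) (σ0 : V ≃ₗᵢ[ℝ] V)
    -- `λ_p ∈ Λ_p` with the alcove condition
    (lp : V) :
    -- the classical part of `μ_λ`
    let μbar : V := σ0 (-(p : ℝ) • ω0 + Real.sqrt p • lp + ρ) - ρ
    ∀ q : ℝ, 0 < q →
      (∑ σ ∈ W, (-1 : ℝ) ^ len σ *
          q ^ ((1 / 2) *
            ‖Real.sqrt p • σ (α + l0 + ρ) - lp - (Real.sqrt p)⁻¹ • ρ‖ ^ 2)) =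
        ∑ σ ∈ W, (-1 : ℝ) ^ len σ *
          q ^ ((1 / (2 * (p : ℝ))) *
            ‖(σ * σ0⁻¹) (μbar + ρ) +
                (p : ℝ) • (σ ω0 - (α + l0 + ρ))‖ ^ 2) := by
  intro μbar q _
  have hp0 : (0 : ℝ) < p := by exact_mod_cast hh.trans hp
  refine Eq.trans ?_ (Finset.sum_comp_inv_of_inv_mem W (fun σ hσ => (hinv σ hσ).1) _)
  refine Finset.sum_congr rfl fun σ hσ => ?_
  have hexp : (1 / (2 * (p : ℝ))) *
        ‖(σ⁻¹ * σ0⁻¹) (μbar + ρ) + (p : ℝ) • (σ⁻¹ ω0 - (α + l0 + ρ))‖ ^ 2 =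
      (1 / 2) * ‖Real.sqrt p • σ (α + l0 + ρ) - lp - (Real.sqrt p)⁻¹ • ρ‖ ^ 2 := by
    rw [sub_add_cancel, add_assoc, LinearIsometryEquiv.inv_mul_inv_apply_add_smul_sub_eq,
      LinearIsometryEquiv.norm_map, norm_sqrt_smul_add_sub_smul_sq hp0]
    field_simp
  rw [(hinv σ hσ).2, hexp]

/-- The character identity of Lemma 3.13/Theorem 3.15: for `p ≥ h`,
`α ∈ P₊ ∩ Q`, `λ₀ ∈ Λ₀ ∪ {0}` and `λ_p ∈ Λ_p` with `(√p λ_p + ρ, θ) ≤ p`,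

`Σ_{σ∈W} (-1)^{l(σ)} q^{(1/2)|√p σ(α+λ₀+ρ) - λ_p - (1/√p)ρ|²}
  = Σ_{σ∈W} (-1)^{l(σ)} q^{(1/(2p))|bar(y_σ ∘ μ_λ) + ρ|²}`,

where `y_σ = t_{σ(ω_{λ₀}) - (α+λ₀+ρ)} σ σ_{λ₀}⁻¹ ∈ Ŵ`,
`μ_λ = σ_{λ₀}(-p ω_{λ₀} + √p λ_p + ρ) - ρ + (p-h)Λ₀`, and
`bar(t_β τ ∘ μ) = τ(μ̄ + ρ) + p β - ρ` is the classical part of the affine dot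
action at level `p - h` (so `bar(y_σ ∘ μ_λ) + ρ
  = (σ σ_{λ₀}⁻¹)(μ̄_λ + ρ) + p(σ(ω_{λ₀}) - (α+λ₀+ρ))`). -/
theorem character_identity_of_simple_quotient
    {V : Type*} [NormedAddCommGroup V] [InnerProductSpace ℝ V]
    -- the Weyl group, as a finite set of isometries with length function
    (W : Finset (V ≃ₗᵢ[ℝ] V)) (len : (V ≃ₗᵢ[ℝ] V) → ℕ)
    (hone : (1 : V ≃ₗᵢ[ℝ] V) ∈ W)
    (hinv : ∀ σ ∈ W, σ⁻¹ ∈ W ∧ len σ⁻¹ = len σ)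
    (hmul : ∀ σ ∈ W, ∀ τ ∈ W, σ * τ ∈ W ∧
        ((-1 : ℝ)) ^ len (σ * τ) = (-1 : ℝ) ^ len σ * (-1 : ℝ) ^ len τ)
    (ρ θ : V) (h p : ℕ) (hh : 1 ≤ h) (hp : h ≤ p)
    -- `α + λ₀ + ρ`, the minuscule weight `ω_{λ₀}` and the Weyl element
    -- `σ_{λ₀}` attached to `λ₀` as in Lemma 3.10
    (α l0 ω0 : V) (σ0 : V ≃ₗᵢ[ℝ] V) (hσ0 : σ0 ∈ W)
    -- `λ_p ∈ Λ_p` with the alcove condition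
    (lp : V)
    (hcond : ⟪Real.sqrt p • lp + ρ, θ⟫ ≤ (p : ℝ)) :
    -- the classical part of `μ_λ`
    let μbar : V := σ0 (-(p : ℝ) • ω0 + Real.sqrt p • lp + ρ) - ρ
    ∀ q : ℝ, 0 < q →
      (∑ σ ∈ W, (-1 : ℝ) ^ len σ *
          q ^ ((1 / 2) *
            ‖Real.sqrt p • σ (α + l0 + ρ) - lp - (Real.sqrt p)⁻¹ • ρ‖ ^ 2)) =
        ∑ σ ∈ W, (-1 : ℝ) ^ len σ *
          q ^ ((1 / (2 * (p : ℝ))) *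
            ‖(σ * σ0⁻¹) (μbar + ρ) +
                (p : ℝ) • (σ ω0 - (α + l0 + ρ))‖ ^ 2) :=
  character_identity_of_simple_quotient_general W len hinv ρ h p hh hp α l0 ω0 σ0 lp
end
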